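/- In SP_9, for any two distinct vertices u and v (adjacent by either a positive or negative edge), and any pair of signs (ε_1, ε_2) ∈ {+,−}², the number of vertices z with uz of sign ε_1 and vz of sign ε_2 is: 1 if uv has sign ε_1 = ε_2 = sign(uv); 2 if ε_1 ≠ ε_2; 2 if ε_1 = ε_2 ≠ sign(uv). -/

import Mathlib

/-- Vertices of `SP_9`, identified with `{0,1,2} × {0,1,2}`. -/
abbrev V9 : Type := Fin 3 × Fin 3

/-- The edge `uv` of `SP_9` is positive: `u ≠ v` and they agree in exactly one coordinate. -/
abbrev pos9 (u v : V9) : Prop :=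
  (u.1 = v.1 ∧ u.2 ≠ v.2) ∨ (u.1 ≠ v.1 ∧ u.2 = v.2)

/-- The edge `uv` of `SP_9` is negative: `u ≠ v` and it is not positive. -/
abbrev neg9 (u v : V9) : Prop := u ≠ v ∧ ¬ pos9 u v

/-- The identification of the labels `{0,…,8}` with `{0,1,2} × {0,1,2}`,
`i ↦ (i div 3, i mod 3)`. -/
def vnum (n : Fin 9) : V9 := (⟨n.val / 3, by omega⟩, ⟨n.val % 3, by omega⟩)

/-- The sign of the edge `uv` of `SP_9` (`true` = positive), for `u ≠ v`. -/
def sgn9 (u v : V9) : Bool := decide (pos9 u v)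

/-!
The positive graph of `SP_9` is the rook's graph `K₃ □ K₃`, which is strongly regular with
parameters `(9, 4, 1, 2)`: two vertices in a common line share the third point of that line,
two vertices in no common line share the two remaining corners of their rectangle. These are the
parameters of a conference graph, whose complement has the same parameters, so the negative graph
gives the same counts `1` and `2`. The mixed counts follow by splitting the `4` neighbours of `u`
according to their relation to `v`: `4 - 1 - 1 = 2` if `uv` is positive and `4 - 2 = 2` if not.
-/

open Finset

namespace SimpleGraph

instance boxProdDecidableRel {α β : Type*} [DecidableEq α] [DecidableEq β] (G : SimpleGraph α)
    (H : SimpleGraph β) [DecidableRel G.Adj] [DecidableRel H.Adj] : DecidableRel (G □ H).Adj :=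
  fun _ _ => decidable_of_iff' _ boxProd_adj

abbrev rookGraph (α : Type*) : SimpleGraph (α × α) := (⊤ : SimpleGraph α) □ ⊤

section Rook

variable {α : Type*}

theorem rookGraph_adj {x y : α × α} :
    (rookGraph α).Adj x y ↔ x.1 = y.1 ∧ x.2 ≠ y.2 ∨ x.1 ≠ y.1 ∧ x.2 = y.2 := by
  rw [boxProd_adj, top_adj, top_adj]
  tauto

variable [Fintype α] [DecidableEq α]

theorem rookGraph_card_commonNeighbors_of_adj {x y : α × α} (h : (rookGraph α).Adj x y) :
    Fintype.card ((rookGraph α).commonNeighbors x y) = Fintype.card α - 2 := by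
  obtain ⟨a, b⟩ := x
  obtain ⟨c, d⟩ := y
  rw [← Set.toFinset_card]
  rcases rookGraph_adj.1 h with ⟨rfl, hbd⟩ | ⟨hac, rfl⟩
  · have hcommon : ((rookGraph α).commonNeighbors (a, b) (a, d)).toFinset =
        ({a} ×ˢ {b, d}ᶜ : Finset (α × α)) := by
      ext ⟨e, f⟩
      simp only [Set.mem_toFinset, mem_commonNeighbors, rookGraph_adj, mem_product, mem_compl,
        mem_insert, mem_singleton]
      grind
    rw [hcommon, card_product, card_singleton, one_mul, card_compl, card_pair hbd]
  · have hcommon : ((rookGraph α).commonNeighbors (a, b) (c, b)).toFinset =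
        ({a, c}ᶜ ×ˢ {b} : Finset (α × α)) := by
      ext ⟨e, f⟩
      simp only [Set.mem_toFinset, mem_commonNeighbors, rookGraph_adj, mem_product, mem_compl,
        mem_insert, mem_singleton]
      grind
    rw [hcommon, card_product, card_singleton, mul_one, card_compl, card_pair hac]

theorem rookGraph_card_commonNeighbors_of_not_adj {x y : α × α} (hne : x ≠ y)
    (h : ¬(rookGraph α).Adj x y) : Fintype.card ((rookGraph α).commonNeighbors x y) = 2 := by
  obtain ⟨a, b⟩ := x
  obtain ⟨c, d⟩ := y
  rw [rookGraph_adj] at h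
  have hac : a ≠ c := by grind
  have hcommon : ((rookGraph α).commonNeighbors (a, b) (c, d)).toFinset = {(a, d), (c, b)} := by
    ext ⟨e, f⟩
    simp only [Set.mem_toFinset, mem_commonNeighbors, rookGraph_adj, mem_insert, mem_singleton,
      Prod.mk.injEq]
    grind
  rw [← Set.toFinset_card, hcommon, card_pair (by simp [hac])]

theorem rookGraph_isSRGWith :
    (rookGraph α).IsSRGWith (Fintype.card α ^ 2) (2 * (Fintype.card α - 1))
      (Fintype.card α - 2) 2 where
  card := by rw [Fintype.card_prod, sq]
  regular x := by
    rw [degree_boxProd, IsRegularOfDegree.top, IsRegularOfDegree.top, two_mul]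
  of_adj _ _ := rookGraph_card_commonNeighbors_of_adj
  of_not_adj _ _ := rookGraph_card_commonNeighbors_of_not_adj

end Rook

section StronglyRegular

variable {V : Type*} [Fintype V] {G : SimpleGraph V} [DecidableRel G.Adj] {n k ℓ μ : ℕ}

variable (G) in
theorem card_commonNeighbors_eq_card_filter (v w : V) :
    Fintype.card (G.commonNeighbors v w) = #{z | G.Adj v z ∧ G.Adj w z} := by
  rw [← Set.toFinset_card]
  congr 1
  ext z
  simp [mem_commonNeighbors]

theorem IsSRGWith.card_commonNeighbors_of_ne (h : G.IsSRGWith n k ℓ μ) {v w : V}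
    (hvw : v ≠ w) :
    Fintype.card (G.commonNeighbors v w) = if G.Adj v w then ℓ else μ := by
  split_ifs with hadj
  exacts [h.of_adj v w hadj, h.of_not_adj hvw hadj]

variable [DecidableEq V]

variable (G) in
theorem card_filter_adj_compl_adj_add (v w : V) :
    #{z | G.Adj v z ∧ Gᶜ.Adj w z} + Fintype.card (G.commonNeighbors v w) +
      (if G.Adj v w then 1 else 0) = G.degree v := by
  have hw : (if G.Adj v w then 1 else 0) = #{z | G.Adj v z ∧ z = w} := by
    rw [filter_and, filter_eq', if_pos (mem_univ w)]
    split_ifs with h <;> simp [h]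
  rw [card_commonNeighbors_eq_card_filter, hw, ← card_neighborFinset_eq_degree,
    neighborFinset_eq_filter, card_filter, card_filter, card_filter, card_filter,
    ← sum_add_distrib, ← sum_add_distrib]
  refine sum_congr rfl fun z _ => ?_
  by_cases hvz : G.Adj v z <;> by_cases hwz : G.Adj w z <;> by_cases hzw : z = w <;>
    simp_all [eq_comm]

theorem IsSRGWith.card_filter_adj_compl_adj (h : G.IsSRGWith n k ℓ μ) {v w : V}
    (hvw : v ≠ w) :
    #{z | G.Adj v z ∧ Gᶜ.Adj w z} = if G.Adj v w then k - ℓ - 1 else k - μ := by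
  have hsplit := G.card_filter_adj_compl_adj_add v w
  rw [h.card_commonNeighbors_of_ne hvw, h.regular.degree_eq] at hsplit
  split_ifs at hsplit ⊢ <;> omega

theorem IsSRGWith.card_filter_decide_adj_eq (h : G.IsSRGWith (4 * μ + 1) (2 * μ) (μ - 1) μ)
    {v w : V} (hvw : v ≠ w) (e₁ e₂ : Bool) :
    #{z | z ≠ v ∧ z ≠ w ∧ decide (G.Adj v z) = e₁ ∧ decide (G.Adj w z) = e₂} =
      if e₁ = e₂ then (if e₁ = decide (G.Adj v w) then μ - 1 else μ) else μ := by
  -- The complement's last parameter `n - (2 * k - ℓ)` is `μ` only for `μ ≠ 0`.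
  have hμ : 1 < 4 * μ + 1 := h.card ▸ Fintype.one_lt_card_iff_nontrivial.2 ⟨v, w, hvw⟩
  have hcompl : Gᶜ.IsSRGWith (4 * μ + 1) (2 * μ) (μ - 1) μ := by
    convert h.compl using 1 <;> omega
  have hmixed {a b : V} (hab : a ≠ b) : #{z | G.Adj a z ∧ Gᶜ.Adj b z} = μ := by
    rw [h.card_filter_adj_compl_adj hab]
    split_ifs <;> omega
  have hsign (a z : V) (e : Bool) :
      z ≠ a ∧ decide (G.Adj a z) = e ↔ if e then G.Adj a z else Gᶜ.Adj a z := by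
    cases e
    · simp [compl_adj, ne_comm]
    · simpa [ne_comm] using Adj.ne
  have hpattern (z : V) :
      (z ≠ v ∧ z ≠ w ∧ decide (G.Adj v z) = e₁ ∧ decide (G.Adj w z) = e₂) ↔
        (if e₁ then G.Adj v z else Gᶜ.Adj v z) ∧
          (if e₂ then G.Adj w z else Gᶜ.Adj w z) := by
    rw [← hsign, ← hsign]
    tauto
  rw [filter_congr fun z _ => hpattern z]
  cases e₁ <;> cases e₂ <;>
    simp only [Bool.false_eq_true, Bool.true_eq_false, if_true, if_false]
  · rw [← card_commonNeighbors_eq_card_filter, hcompl.card_commonNeighbors_of_ne hvw]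
    simp [compl_adj, hvw]
  · simp_rw [and_comm (a := Gᶜ.Adj v _), hmixed hvw.symm]
  · rw [hmixed hvw]
  · rw [← card_commonNeighbors_eq_card_filter, h.card_commonNeighbors_of_ne hvw]
    simp

end StronglyRegular

end SimpleGraph

open SimpleGraph

theorem sgn9_eq_decide_rookGraph_adj (u v : V9) :
    sgn9 u v = decide ((rookGraph (Fin 3)).Adj u v) := by
  rw [sgn9, Bool.eq_iff_iff, decide_eq_true_iff, decide_eq_true_iff, rookGraph_adj]

/-- Lemma 1 stated uniformly: for any edge `uv` of `SP_9` and any pair of signs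
`(e₁, e₂)`, the number of vertices `z` with `uz` of sign `e₁` and `vz` of sign
`e₂` is `1` when `e₁ = e₂ = sgn(uv)`, and `2` otherwise. -/
theorem sp9_adjacency_counts :
    ∀ u v : V9, u ≠ v → ∀ e₁ e₂ : Bool,
      (Finset.univ.filter
          (fun z : V9 => z ≠ u ∧ z ≠ v ∧ sgn9 u z = e₁ ∧ sgn9 v z = e₂)).card =
        if e₁ = e₂ then (if e₁ = sgn9 u v then 1 else 2) else 2 := by
  intro u v huv e₁ e₂
  have hrook : (rookGraph (Fin 3)).IsSRGWith (4 * 2 + 1) (2 * 2) (2 - 1) 2 :=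
    rookGraph_isSRGWith
  simp only [sgn9_eq_decide_rookGraph_adj]
  exact hrook.card_filter_decide_adj_eq huv e₁ e₂
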